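/- arXiv:math/0609150 — 3 statements merged into one kernel-verified Lean document; each statement's English description precedes it below -/
import Mathlib

section
/- Let R = k[x_1,…,x_r] be a standard graded polynomial ring over a field k of characteristic zero, let I ⊆ R be a homogeneous ideal with A = R/I artinian, and let t ≥ 1 be an integer such that dim_k (R/I)_t ≤ t. Then there exists a linear form L ∈ R_1 such that dim_k (R/(I + (L)))_t = 0. -/
open MvPolynomial Finset

/-- The degree-`i` graded piece of `R/I` (`R = k[x_1,…,x_r]` standard graded),
namely the image of the space of homogeneous polynomials of degree `i`
under the quotient map. -/
noncomputable def quotPiece (k : Type) [Field k] {r : ℕ}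
    (I : Ideal (MvPolynomial (Fin r) k)) (i : ℕ) :
    Submodule k (MvPolynomial (Fin r) k ⧸ I) :=
  (homogeneousSubmodule (Fin r) k i).map (Ideal.Quotient.mkₐ k I).toLinearMap

/-- The Hilbert function of `R/I`: `h_i = dim_k (R/I)_i`. -/
noncomputable def hilb (k : Type) [Field k] {r : ℕ}
    (I : Ideal (MvPolynomial (Fin r) k)) (i : ℕ) : ℕ :=
  Module.finrank k (quotPiece k I i)

/-- `I` is a homogeneous ideal: it contains all homogeneous components of its
elements. -/
def IsHomogIdeal {k : Type} [Field k] {r : ℕ}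
    (I : Ideal (MvPolynomial (Fin r) k)) : Prop :=
  ∀ f ∈ I, ∀ n : ℕ, (homogeneousComponent n f : MvPolynomial (Fin r) k) ∈ I

/-- `A = R/I` is artinian: the graded pieces vanish in all high degrees. -/
def ArtinianQuot (k : Type) [Field k] {r : ℕ}
    (I : Ideal (MvPolynomial (Fin r) k)) : Prop :=
  ∃ N : ℕ, ∀ i ≥ N, hilb k I i = 0

/-- The Weak Lefschetz Property: there is a linear form `L` such that, for
every `i ≥ 0`, multiplication by `L` from the degree-`i` piece of `R/I` to the
degree-`(i+1)` piece has maximal rank, i.e. is injective or surjective. -/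
def WLP (k : Type) [Field k] {r : ℕ}
    (I : Ideal (MvPolynomial (Fin r) k)) : Prop :=
  ∃ L ∈ homogeneousSubmodule (Fin r) k 1, ∀ i : ℕ,
    (∀ x ∈ quotPiece k I i, Ideal.Quotient.mk I L * x = 0 → x = 0) ∨
    (∀ y ∈ quotPiece k I (i + 1), ∃ x ∈ quotPiece k I i, Ideal.Quotient.mk I L * x = y)

/-- `c` (on the indices `j ≤ m ≤ i`) records the `i`-binomial expansion of `n`:
`n = C(c i, i) + C(c (i-1), i-1) + ⋯ + C(c j, j)` where
`c i > c (i-1) > ⋯ > c j ≥ j ≥ 1`. -/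
def IsBinExp (n i j : ℕ) (c : ℕ → ℕ) : Prop :=
  1 ≤ j ∧ j ≤ i ∧ j ≤ c j ∧ StrictMonoOn c (Set.Icc j i) ∧
  n = ∑ m ∈ Finset.Icc j i, (c m).choose m

/-!
Write `R_n` for the forms of degree `n` and `L_c = ∑ cᵢ xᵢ`. With `V = I ∩ R_t`, of codimension
`h_t ≤ t` in `R_t`, it suffices to find `c` with `R_t = V + L_c R_{t-1}`. Over an infinite field
this holds for every subspace `V ⊆ R_{n+1}` of codimension at most `n + 1`, by induction on `n`.

For the step choose `c₀` maximising `dim (V + L_c R_{n+1})` and suppose `V + L_{c₀} R_{n+1}` is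
a proper subspace of `R_{n+2}`. Then `V₀ = {f ∈ R_{n+1} | L_{c₀} f ∈ V}` has codimension at most
`n + 1`, so `R_{n+1} = V₀ + L_c R_n` for some `c` by induction, hence for all `c` off a
hypersurface, since spanning is witnessed by a nonvanishing minor whose determinant is a
polynomial in `c`. For those `c` we get `V + L_{c₀} R_{n+1} ⊆ V + L_c R_{n+1}`, an equality by
maximality, so `L_c R_{n+1} ⊆ V + L_{c₀} R_{n+1}` off a hypersurface, hence for all `c`. Then
`R_{n+2} = R_1 R_{n+1}` lies in `V + L_{c₀} R_{n+1}`, a contradiction.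
-/

open Module Submodule

section LinearAlgebra

variable {k M N : Type*} [Field k] [AddCommGroup M] [Module k M] [AddCommGroup N] [Module k N]

theorem Submodule.finrank_map_add_finrank_inf_ker (f : M →ₗ[k] N) (p : Submodule k M)
    [FiniteDimensional k p] :
    finrank k (p.map f) + finrank k ↥(p ⊓ LinearMap.ker f) = finrank k p := by
  have := (f.domRestrict p).finrank_range_add_finrank_ker
  rwa [LinearMap.range_domRestrict, LinearMap.ker_domRestrict,
    ← finrank_map_subtype_eq, map_comap_subtype] at this

theorem Submodule.finrank_sup_map_add_finrank_inf_comap (f : M →ₗ[k] N) (V : Submodule k N)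
    (W : Submodule k M) [FiniteDimensional k V] [FiniteDimensional k W] :
    finrank k ↥(V ⊔ W.map f) + finrank k ↥(W ⊓ V.comap f) = finrank k V + finrank k W := by
  have hsup := finrank_sup_add_finrank_inf_eq V (W.map f)
  rw [inf_comm, map_inf_eq_map_inf_comap] at hsup
  have hW := finrank_map_add_finrank_inf_ker f W
  have hWV := finrank_map_add_finrank_inf_ker f (W ⊓ V.comap f)
  rw [inf_assoc, inf_eq_right.mpr (LinearMap.ker_le_comap f)] at hWV
  omega

theorem exists_linearIndependent_comp_fin {ι : Type*} {v : ι → M} {ρ : ℕ}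
    (h : ρ ≤ finrank k (span k (Set.range v))) :
    ∃ s : Fin ρ → ι, LinearIndependent k (v ∘ s) := by
  rcases Nat.eq_zero_or_pos ρ with rfl | hρ
  · exact ⟨Fin.elim0, linearIndependent_empty_type⟩
  have := Module.finite_of_finrank_pos (hρ.trans_le h)
  obtain ⟨κ, a, -, hspan, hli⟩ := exists_linearIndependent' k v
  have : Fintype κ :=
    have : Finite κ := LinearIndependent.finite_of_isNoetherian
      (v := fun i => (⟨v (a i), subset_span ⟨a i, rfl⟩⟩ : span k (Set.range v)))
      (.of_comp (span k _).subtype hli)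
    Fintype.ofFinite κ
  rw [← hspan, finrank_span_eq_card hli] at h
  let e : Fin ρ ↪ κ := (Fin.castLEEmb h).trans (Fintype.equivFin κ).symm.toEmbedding
  exact ⟨a ∘ e, hli.comp e e.injective⟩

theorem Submodule.span_range_map_finBasis (f : M →ₗ[k] N) (V : Submodule k M)
    [FiniteDimensional k V] : span k (Set.range fun i => f (finBasis k V i)) = V.map f := by
  rw [show (fun i => f (finBasis k V i)) = (f ∘ₗ V.subtype) ∘ finBasis k V from rfl,
    Set.range_comp, span_image, (finBasis k V).span_eq, map_top, LinearMap.range_comp,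
    range_subtype]

variable {κ : Type*} (b : Basis κ k M)

theorem Module.Basis.exists_det_repr_ne_zero {ρ : ℕ} {w : Fin ρ → M} (hw : LinearIndependent k w) :
    ∃ μ : Fin ρ → κ, (Matrix.of fun a j => b.repr (w j) (μ a)).det ≠ 0 := by
  classical
  set row : κ → Fin ρ → k := fun d j => b.repr (w j) d
  have hspan : span k (Set.range row) = ⊤ := by
    by_contra hne
    obtain ⟨f, hf, hle⟩ := exists_le_ker_of_lt_top _ (lt_top_iff_ne_top.mpr hne)
    set g : Fin ρ → k := fun j => f (Pi.single j 1)
    have hfg : ∀ x, f x = ∑ j, x j * g j := fun x => by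
      rw [LinearMap.pi_apply_eq_sum_univ f x]
      congr! 3 with j
      ext i
      simp [Pi.single_apply, eq_comm]
    have hg : ∑ j, g j • w j = 0 := b.repr.injective <| Finsupp.ext fun d => by
      have : f (row d) = 0 := hle (subset_span ⟨d, rfl⟩)
      simpa [hfg, row, Finsupp.finsetSum_apply, mul_comm] using this
    have hg0 := Fintype.linearIndependent_iff.mp hw g hg
    exact hf <| LinearMap.ext fun x => by simp [hfg, hg0]
  obtain ⟨μ, hμ⟩ := exists_linearIndependent_comp_fin (v := row) (ρ := ρ) (by
    rw [hspan, finrank_top, finrank_fin_fun])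
  refine ⟨μ, ((Matrix.isUnit_iff_isUnit_det _).mp ?_).ne_zero⟩
  exact Matrix.linearIndependent_rows_iff_isUnit.mp hμ

theorem Module.Basis.linearIndependent_of_det_repr_ne_zero {ρ : ℕ} {w : Fin ρ → M} (μ : Fin ρ → κ)
    (h : (Matrix.of fun a j => b.repr (w j) (μ a)).det ≠ 0) : LinearIndependent k w :=
  .of_comp (LinearMap.pi fun a => b.coord (μ a)) <| Matrix.linearIndependent_cols_iff_isUnit.mpr <|
    (Matrix.isUnit_iff_isUnit_det _).mpr (isUnit_iff_ne_zero.mpr h)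

theorem Module.Basis.exists_ne_zero_forall_le_finrank_span {τ ι : Type*} [Finite ι]
    (fam : (τ → k) → ι → M)
    (hpoly : ∀ i d, ∃ P : MvPolynomial τ k, ∀ c, eval c P = b.repr (fam c i) d)
    {c₀ : τ → k} {ρ : ℕ} (h : ρ ≤ finrank k (span k (Set.range (fam c₀)))) :
    ∃ P : MvPolynomial τ k, P ≠ 0 ∧
      ∀ c, eval c P ≠ 0 → ρ ≤ finrank k (span k (Set.range (fam c))) := by
  choose Q hQ using hpoly
  obtain ⟨s, hs⟩ := exists_linearIndependent_comp_fin h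
  obtain ⟨μ, hμ⟩ := b.exists_det_repr_ne_zero hs
  have heval : ∀ c, eval c (Matrix.of fun a j => Q (s j) (μ a)).det =
      (Matrix.of fun a j => b.repr ((fam c ∘ s) j) (μ a)).det := fun c => by
    rw [RingHom.map_det]
    congr
    ext a j
    simp [hQ]
  refine ⟨(Matrix.of fun a j => Q (s j) (μ a)).det,
    fun h0 => hμ (by rw [← heval, h0, map_zero]), fun c hc => ?_⟩
  rw [heval] at hc
  have := FiniteDimensional.span_of_finite k (Set.finite_range (fam c))
  calc ρ = finrank k (span k (Set.range (fam c ∘ s))) := by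
        rw [finrank_span_eq_card (b.linearIndependent_of_det_repr_ne_zero μ hc), Fintype.card_fin]
    _ ≤ finrank k (span k (Set.range (fam c))) :=
        finrank_mono (span_mono (Set.range_comp_subset_range _ _))

end LinearAlgebra

theorem Submodule.eq_top_of_forall_eval_ne_zero_mem {k τ : Type*} [Field k] [Infinite k]
    [Fintype τ] {U : Submodule k (τ → k)} {P : MvPolynomial τ k} (hP : P ≠ 0)
    (h : ∀ c, eval c P ≠ 0 → c ∈ U) : U = ⊤ := by
  classical
  by_contra hU
  obtain ⟨f, hf, hUf⟩ := exists_le_ker_of_lt_top _ (lt_top_iff_ne_top.mpr hU)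
  set Q : MvPolynomial τ k := ∑ i, C (f (Pi.single i 1)) * X i
  have hQ : ∀ c, eval c Q = f c := fun c => by
    rw [LinearMap.pi_apply_eq_sum_univ f c]
    simp only [Q, map_sum, map_mul, eval_C, eval_X, smul_eq_mul, mul_comm]
    congr! 3 with j
    ext i
    simp [Pi.single_apply, eq_comm]
  have hQP : Q * P = 0 := MvPolynomial.funext fun c => by
    by_cases hc : eval c P = 0
    · simp [hc]
    · rw [map_mul, hQ, LinearMap.mem_ker.mp (hUf (h c hc)), zero_mul, map_zero]
  have hQ0 : Q = 0 := (mul_eq_zero.mp hQP).resolve_right hP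
  exact hf <| LinearMap.ext fun c => by simp [← hQ, hQ0]

section Polynomial

variable {k σ : Type*} [Field k]

local notation "𝓗" n:max => homogeneousSubmodule σ k n

instance [Finite σ] (n : ℕ) : FiniteDimensional k (𝓗 n) :=
  Module.Finite.iff_fg.mpr (homogeneousSubmodule_fg σ k n)

theorem homogeneousSubmodule_succ (n : ℕ) : 𝓗 (n + 1) = 𝓗 1 * 𝓗 n := by
  rw [← homogeneousSubmodule_one_pow (σ := σ) k (n + 1), pow_succ', homogeneousSubmodule_one_pow]

theorem sup_map_mulLeft_le_sup_map_mulLeft {A : Type*} [CommRing A] [Algebra k A]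
    {V W W₀ : Submodule k A} {u u' : A} (hW₀ : W₀.map (LinearMap.mulLeft k u) ≤ W)
    (hW : W ≤ V.comap (LinearMap.mulLeft k u) ⊔ W₀.map (LinearMap.mulLeft k u')) :
    V ⊔ W.map (LinearMap.mulLeft k u) ≤ V ⊔ W.map (LinearMap.mulLeft k u') := by
  refine sup_le le_sup_left ?_
  rintro _ ⟨w, hw, rfl⟩
  obtain ⟨a, ha, _, ⟨b, hb, rfl⟩, rfl⟩ := mem_sup.mp (hW hw)
  have : LinearMap.mulLeft k u (a + LinearMap.mulLeft k u' b) = u * a + u' * (u * b) := by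
    simp only [LinearMap.mulLeft_apply]
    ring
  rw [this]
  exact add_mem (mem_sup_left ha) (mem_sup_right ⟨u * b, hW₀ ⟨b, hb, rfl⟩, rfl⟩)

theorem map_mulLeft_homogeneousSubmodule_le {L : MvPolynomial σ k} (hL : L ∈ 𝓗 1) (n : ℕ) :
    (𝓗 n).map (LinearMap.mulLeft k L) ≤ 𝓗 (n + 1) := by
  rintro _ ⟨f, hf, rfl⟩
  simpa [add_comm] using homogeneousSubmodule_mul 1 n (mul_mem_mul hL hf)

theorem exists_le_sup_map_mulLeft_zero [Finite σ] {V : Submodule k (MvPolynomial σ k)}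
    (hV : V ≤ 𝓗 1) (hcodim : finrank k (𝓗 1) ≤ finrank k V + 1) :
    ∃ L ∈ 𝓗 1, 𝓗 1 ≤ V ⊔ (𝓗 0).map (LinearMap.mulLeft k L) := by
  by_cases hle : 𝓗 1 ≤ V
  · exact ⟨0, zero_mem _, hle.trans le_sup_left⟩
  obtain ⟨u, hu, huV⟩ := SetLike.not_le_iff_exists.mp hle
  have hT : V ⊔ (𝓗 0).map (LinearMap.mulLeft k u) ≤ 𝓗 1 :=
    sup_le hV (map_mulLeft_homogeneousSubmodule_le hu 0)
  have hlt : V < V ⊔ (𝓗 0).map (LinearMap.mulLeft k u) := lt_of_le_of_ne le_sup_left fun h =>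
    huV <| h ▸ mem_sup_right ⟨1, isHomogeneous_one σ k, mul_one u⟩
  have := finiteDimensional_of_le hT
  have := finrank_lt_finrank_of_lt hlt
  exact ⟨u, hu, (eq_of_le_of_finrank_le hT (by omega)).ge⟩

variable [Fintype σ]

variable (k σ) in
noncomputable def linearForm : (σ → k) →ₗ[k] MvPolynomial σ k := Fintype.linearCombination k X

theorem range_linearForm : LinearMap.range (linearForm k σ) = 𝓗 1 := by
  rw [linearForm, Fintype.range_linearCombination, homogeneousSubmodule_one_eq_span_X]

theorem linearForm_mem (c : σ → k) : linearForm k σ c ∈ 𝓗 1 :=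
  range_linearForm (k := k) (σ := σ) ▸ LinearMap.mem_range_self _ c

theorem exists_linearForm_eq {L : MvPolynomial σ k} (hL : L ∈ 𝓗 1) : ∃ c, linearForm k σ c = L :=
  LinearMap.mem_range.mp (range_linearForm (k := k) (σ := σ) ▸ hL)

theorem coeff_linearForm_mul (c : σ → k) (f : MvPolynomial σ k) (d : σ →₀ ℕ) :
    coeff d (linearForm k σ c * f) = eval c (∑ i, C (coeff d (X i * f)) * X i) := by
  rw [linearForm, Fintype.linearCombination_apply, Finset.sum_mul, coeff_sum, map_sum]
  refine Finset.sum_congr rfl fun i _ => ?_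
  rw [smul_mul_assoc, coeff_smul, map_mul, eval_C, eval_X, smul_eq_mul, mul_comm]

theorem mul_mem_of_forall_eval_ne_zero [Infinite k] {W : Submodule k (MvPolynomial σ k)}
    {f P : MvPolynomial σ k} (hP : P ≠ 0) (h : ∀ c, eval c P ≠ 0 → linearForm k σ c * f ∈ W)
    {L : MvPolynomial σ k} (hL : L ∈ 𝓗 1) : L * f ∈ W := by
  obtain ⟨c, rfl⟩ := exists_linearForm_eq hL
  have hU := eq_top_of_forall_eval_ne_zero_mem
    (U := W.comap (LinearMap.mulRight k f ∘ₗ linearForm k σ)) hP h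
  exact (hU ▸ mem_top : c ∈ W.comap _)

theorem exists_ne_zero_forall_le_sup_map_mulLeft {U V W : Submodule k (MvPolynomial σ k)}
    [FiniteDimensional k U] [FiniteDimensional k V] [FiniteDimensional k W]
    (hle : ∀ c, V ⊔ W.map (LinearMap.mulLeft k (linearForm k σ c)) ≤ U) {c₀ : σ → k}
    (h : U ≤ V ⊔ W.map (LinearMap.mulLeft k (linearForm k σ c₀))) :
    ∃ P : MvPolynomial σ k, P ≠ 0 ∧
      ∀ c, eval c P ≠ 0 → U ≤ V ⊔ W.map (LinearMap.mulLeft k (linearForm k σ c)) := by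
  set fam : (σ → k) → Fin (finrank k V) ⊕ Fin (finrank k W) → MvPolynomial σ k := fun c =>
    Sum.elim (fun i => finBasis k V i) (fun j => linearForm k σ c * finBasis k W j)
  have hspan : ∀ c, span k (Set.range (fam c)) =
      V ⊔ W.map (LinearMap.mulLeft k (linearForm k σ c)) := fun c => by
    rw [Set.Sum.elim_range, span_union]
    congr 1
    · simpa using span_range_map_finBasis LinearMap.id V
    · exact span_range_map_finBasis (LinearMap.mulLeft k (linearForm k σ c)) W
  have hpoly : ∀ i d, ∃ P : MvPolynomial σ k, ∀ c,
      eval c P = (basisMonomials σ k).repr (fam c i) d := by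
    rintro (i | j) d
    · exact ⟨C (coeff d (finBasis k V i : MvPolynomial σ k)), fun c => eval_C _⟩
    · exact ⟨_, fun c => (coeff_linearForm_mul c _ d).symm⟩
  obtain ⟨P, hP, hPc⟩ := (basisMonomials σ k).exists_ne_zero_forall_le_finrank_span fam hpoly
    (ρ := finrank k U) (c₀ := c₀) (by rw [hspan]; exact finrank_mono h)
  refine ⟨P, hP, fun c hc => (eq_of_le_of_finrank_le (hle c) ?_).ge⟩
  rw [← hspan]
  exact hPc c hc

variable [Infinite k]

theorem exists_le_sup_map_mulLeft_succ {n : ℕ}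
    (ih : ∀ V : Submodule k (MvPolynomial σ k), V ≤ 𝓗 (n + 1) →
      finrank k (𝓗 (n + 1)) ≤ finrank k V + (n + 1) →
      ∃ L ∈ 𝓗 1, 𝓗 (n + 1) ≤ V ⊔ (𝓗 n).map (LinearMap.mulLeft k L))
    {V : Submodule k (MvPolynomial σ k)} (hV : V ≤ 𝓗 (n + 2))
    (hcodim : finrank k (𝓗 (n + 2)) ≤ finrank k V + (n + 2)) :
    ∃ L ∈ 𝓗 1, 𝓗 (n + 2) ≤ V ⊔ (𝓗 (n + 1)).map (LinearMap.mulLeft k L) := by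
  have := finiteDimensional_of_le hV
  set T : (σ → k) → Submodule k (MvPolynomial σ k) :=
    fun c => V ⊔ (𝓗 (n + 1)).map (LinearMap.mulLeft k (linearForm k σ c))
  have hT : ∀ c, T c ≤ 𝓗 (n + 2) :=
    fun c => sup_le hV (map_mulLeft_homogeneousSubmodule_le (linearForm_mem c) _)
  have hbdd : BddAbove (Set.range fun c => finrank k (T c)) :=
    ⟨_, Set.forall_mem_range.mpr fun c => finrank_mono (hT c)⟩
  obtain ⟨c₀, hc₀⟩ := Nat.sSup_mem (Set.range_nonempty fun c => finrank k (T c)) hbdd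
  have hmax : ∀ c, finrank k (T c) ≤ finrank k (T c₀) := fun c =>
    (le_csSup hbdd ⟨c, rfl⟩).trans_eq hc₀.symm
  refine ⟨linearForm k σ c₀, linearForm_mem c₀, ?_⟩
  by_contra hne
  set V₀ := 𝓗 (n + 1) ⊓ V.comap (LinearMap.mulLeft k (linearForm k σ c₀))
  have hV₀ : finrank k (𝓗 (n + 1)) ≤ finrank k V₀ + (n + 1) := by
    have hlt := finrank_lt_finrank_of_lt (lt_of_le_not_ge (hT c₀) hne)
    have : finrank k (T c₀) + finrank k V₀ = finrank k V + finrank k (𝓗 (n + 1)) :=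
      finrank_sup_map_add_finrank_inf_comap _ V _
    omega
  obtain ⟨L₁, hL₁, hle₁⟩ := ih V₀ inf_le_left hV₀
  obtain ⟨c₁, rfl⟩ := exists_linearForm_eq hL₁
  obtain ⟨P, hP, hPc⟩ := exists_ne_zero_forall_le_sup_map_mulLeft
    (fun c => sup_le inf_le_left (map_mulLeft_homogeneousSubmodule_le (linearForm_mem c) n)) hle₁
  have hgen : ∀ c, eval c P ≠ 0 → ∀ f ∈ 𝓗 (n + 1), linearForm k σ c * f ∈ T c₀ := by
    intro c hc f hf
    have hle : T c₀ ≤ T c := sup_map_mulLeft_le_sup_map_mulLeft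
      (map_mulLeft_homogeneousSubmodule_le (linearForm_mem c₀) n)
      ((hPc c hc).trans (sup_le_sup_right inf_le_right _))
    rw [eq_of_le_of_finrank_le hle (hmax c)]
    exact mem_sup_right ⟨f, hf, rfl⟩
  refine hne ?_
  rw [homogeneousSubmodule_succ]
  exact mul_le.mpr fun L hL f hf =>
    mul_mem_of_forall_eval_ne_zero hP (fun c hc => hgen c hc f hf) hL

theorem exists_le_sup_map_mulLeft_of_codim_le (n : ℕ) {V : Submodule k (MvPolynomial σ k)}
    (hV : V ≤ 𝓗 (n + 1)) (hcodim : finrank k (𝓗 (n + 1)) ≤ finrank k V + (n + 1)) :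
    ∃ L ∈ 𝓗 1, 𝓗 (n + 1) ≤ V ⊔ (𝓗 n).map (LinearMap.mulLeft k L) := by
  induction n generalizing V with
  | zero => exact exists_le_sup_map_mulLeft_zero hV hcodim
  | succ n ih => exact exists_le_sup_map_mulLeft_succ (fun V' hV' h => ih hV' h) hV hcodim

end Polynomial

theorem Ideal.Quotient.ker_mkₐ_toLinearMap {k A : Type*} [CommRing k] [CommRing A] [Algebra k A]
    (I : Ideal A) : LinearMap.ker (Ideal.Quotient.mkₐ k I).toLinearMap = I.restrictScalars k := by
  ext f
  simp [Ideal.Quotient.eq_zero_iff_mem]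

theorem hilb_add_finrank_inf_restrictScalars {k : Type} [Field k] {r : ℕ}
    (I : Ideal (MvPolynomial (Fin r) k)) (n : ℕ) :
    hilb k I n + finrank k ↥(homogeneousSubmodule (Fin r) k n ⊓ I.restrictScalars k) =
      finrank k (homogeneousSubmodule (Fin r) k n) := by
  rw [hilb, quotPiece, ← Ideal.Quotient.ker_mkₐ_toLinearMap]
  exact finrank_map_add_finrank_inf_ker _ _

theorem hilb_eq_zero_of_le {k : Type} [Field k] {r : ℕ} {J : Ideal (MvPolynomial (Fin r) k)}
    {n : ℕ} (h : homogeneousSubmodule (Fin r) k n ≤ J.restrictScalars k) : hilb k J n = 0 := by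
  rw [hilb, quotPiece, LinearMap.le_ker_iff_map.mp (h.trans_eq
    (Ideal.Quotient.ker_mkₐ_toLinearMap J).symm), finrank_bot]

theorem stmt5_general (k : Type) [Field k] [CharZero k] (r : ℕ)
    (I : Ideal (MvPolynomial (Fin r) k))
    (t : ℕ) (ht : 1 ≤ t) (hht : hilb k I t ≤ t) :
    ∃ L ∈ homogeneousSubmodule (Fin r) k 1, hilb k (I ⊔ Ideal.span {L}) t = 0 := by
  obtain ⟨s, rfl⟩ := Nat.exists_eq_add_of_le' ht
  have hcodim := hilb_add_finrank_inf_restrictScalars I (s + 1)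
  obtain ⟨L, hL, hle⟩ := exists_le_sup_map_mulLeft_of_codim_le s
    (V := homogeneousSubmodule (Fin r) k (s + 1) ⊓ I.restrictScalars k) inf_le_left (by omega)
  refine ⟨L, hL, hilb_eq_zero_of_le (hle.trans (sup_le ?_ ?_))⟩
  · exact inf_le_right.trans (restrictScalars_mono k le_sup_left)
  · rintro _ ⟨f, -, rfl⟩
    exact Ideal.mem_sup_right (Ideal.mul_mem_right f _ (Ideal.mem_span_singleton_self L))

/-- consequence of Green's theorem. Over a field of
characteristic zero, if `A = R/I` is artinian and `t ≥ 1` satisfies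
`dim_k (R/I)_t ≤ t`, then there is a linear form `L` with
`dim_k (R/(I+(L)))_t = 0`. -/
theorem stmt5 (k : Type) [Field k] [CharZero k] (r : ℕ)
    (I : Ideal (MvPolynomial (Fin r) k)) (hIhom : IsHomogIdeal I)
    (hart : ArtinianQuot k I)
    (t : ℕ) (ht : 1 ≤ t) (hht : hilb k I t ≤ t) :
    ∃ L ∈ homogeneousSubmodule (Fin r) k 1, hilb k (I ⊔ Ideal.span {L}) t = 0 :=
  stmt5_general k r I t ht hht
end

section
/- (Corollary 7.) Let k be a field of characteristic zero and let A = R/I be any artinian standard graded algebra with dim_k A_1 ≤ 2 (equivalently, any artinian quotient of a polynomial ring in two variables, i.e., any codimension ≤ 2 artinian algebra). Then A enjoys the Weak Lefschetz Property. -/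
open MvPolynomial Finset

/-! Since `A_1` is spanned by two elements, `A` is a quotient of `k[y₀, y₁]` by a map `ψ` preserving
degrees. Let `f` be a nonzero form of least degree `d` in `ker ψ` (it exists as `A` is artinian),
choose a point `pt ≠ 0` with `f(pt) ≠ 0` (the field is infinite) and a linear form `ℓ` vanishing at
`pt`. Multiplication by `ψ ℓ` is injective on `A_i` for `i + 1 < d`, since `k[y₀, y₁]` is a domain.
For `i + 1 ≥ d` it is surjective: the forms of degree `i + 1` are spanned by the multiples of `ℓ`
together with `y₀ ^ (i + 1 - d) * f ∈ ker ψ`, which does not vanish at `pt`. -/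

namespace MvPolynomial

variable {σ τ k : Type*} [Field k]

instance (n : ℕ) [Finite σ] : Module.Finite k (homogeneousSubmodule σ k n) :=
  Module.Finite.iff_fg.mpr (homogeneousSubmodule_fg σ k n)

theorem finrank_homogeneousSubmodule [Fintype σ] [DecidableEq σ] (n : ℕ) :
    Module.finrank k (homogeneousSubmodule σ k n) = (Fintype.card σ + n - 1).choose n := by
  have hs : {d : σ →₀ ℕ | d.degree = n} = ↑((univ : Finset σ).finsuppAntidiag n) := by
    ext d
    simp [mem_finsuppAntidiag, Finsupp.degree_eq_sum]
  rw [homogeneousSubmodule_eq_finsupp_supported, hs,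
    (AddMonoidAlgebra.supportedEquivFinsupp _).finrank_eq, Module.finrank_finsupp_self]
  simp [card_finsuppAntidiag_nat_eq_choose]

theorem finrank_homogeneousSubmodule_fin_two (n : ℕ) :
    Module.finrank k (homogeneousSubmodule (Fin 2) k n) = n + 1 := by
  simp [finrank_homogeneousSubmodule, add_comm]

theorem map_aeval_homogeneousSubmodule_le {R : Type*} [CommSemiring R]
    {u : σ → MvPolynomial τ R} (hu : ∀ i, u i ∈ homogeneousSubmodule τ R 1) (n : ℕ) :
    (homogeneousSubmodule σ R n).map (aeval u).toLinearMap ≤ homogeneousSubmodule τ R n := by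
  rintro _ ⟨p, hp, rfl⟩
  simpa using hp.aeval u hu

theorem exists_isHomogeneous_one_ne_zero_eval_eq_zero {pt : Fin 2 → k} (hpt : pt ≠ 0) :
    ∃ ℓ : MvPolynomial (Fin 2) k, ℓ.IsHomogeneous 1 ∧ ℓ ≠ 0 ∧ eval pt ℓ = 0 := by
  refine ⟨C (pt 1) * X 0 - C (pt 0) * X 1,
    (isHomogeneous_C_mul_X _ 0).sub (isHomogeneous_C_mul_X _ 1), fun h => hpt ?_,
    by simp [mul_comm]⟩
  funext i
  fin_cases i
  · simpa using congrArg (coeff (Finsupp.single 1 1)) h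
  · simpa using congrArg (coeff (Finsupp.single 0 1)) h

/-- The multiples of `ℓ` form a hyperplane among the forms of degree `j + 1`, so they are all of
the forms vanishing at `pt`. -/
theorem exists_eq_mul_of_eval_eq_zero {ℓ : MvPolynomial (Fin 2) k} (hℓ : ℓ.IsHomogeneous 1)
    (hℓ0 : ℓ ≠ 0) {pt : Fin 2 → k} (hpt : pt ≠ 0) (hℓpt : eval pt ℓ = 0) {j : ℕ}
    {p : MvPolynomial (Fin 2) k} (hp : p.IsHomogeneous (j + 1)) (hppt : eval pt p = 0) :
    ∃ q, q.IsHomogeneous j ∧ p = ℓ * q := by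
  set V := homogeneousSubmodule (Fin 2) k (j + 1)
  set M := (homogeneousSubmodule (Fin 2) k j).map (LinearMap.mulLeft k ℓ)
  set K := V ⊓ LinearMap.ker (aeval pt).toLinearMap
  have hMK : M ≤ K := by
    rintro _ ⟨q, hq, rfl⟩
    exact ⟨by simpa [V, add_comm] using hℓ.mul hq, by simp [hℓpt]⟩
  have hKV : K < V := by
    obtain ⟨s, hs⟩ := Function.ne_iff.mp hpt
    refine lt_of_le_of_ne inf_le_left fun h => ?_
    have : X s ^ (j + 1) ∈ K := h ▸ isHomogeneous_X_pow s (j + 1)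
    exact hs (by simpa using this.2)
  have hM : Module.finrank k M = j + 1 := by
    rw [← (Submodule.equivMapOfInjective _ (mul_right_injective₀ hℓ0) _).finrank_eq,
      finrank_homogeneousSubmodule_fin_two]
  have hM_eq : M = K := by
    refine Submodule.eq_of_le_of_finrank_le hMK ?_
    have := Submodule.finrank_lt_finrank_of_lt hKV
    rw [finrank_homogeneousSubmodule_fin_two] at this
    omega
  obtain ⟨q, hq, hqp⟩ : p ∈ M := hM_eq ▸ ⟨hp, hppt⟩
  exact ⟨q, hq, hqp.symm⟩

end MvPolynomial

theorem Submodule.exists_fun_fin_span_eq_of_finrank_le {K M : Type*} [DivisionRing K]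
    [AddCommGroup M] [Module K M] {V : Submodule K M} [Module.Finite K V] {n : ℕ}
    (hn : Module.finrank K V ≤ n) : ∃ w : Fin n → M, Submodule.span K (Set.range w) = V := by
  have hV : Submodule.span K (V : Set M) = V := Submodule.span_eq V
  have : Module.Finite K (Submodule.span K (V : Set M)) := by rwa [hV]
  obtain ⟨f, -, hf, -⟩ := Submodule.exists_fun_fin_finrank_span_eq K (V : Set M)
  have hdn : Module.finrank K (Submodule.span K (V : Set M)) ≤ n := by rwa [hV]
  generalize Module.finrank K (Submodule.span K (V : Set M)) = d at f hf hdn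
  refine ⟨fun i => if h : (i : ℕ) < d then f ⟨i, h⟩ else 0, ?_⟩
  rw [← hV, ← hf]
  refine le_antisymm (Submodule.span_le.mpr ?_) (Submodule.span_mono ?_)
  · rintro _ ⟨i, rfl⟩
    dsimp only
    split_ifs
    · exact Submodule.subset_span ⟨_, rfl⟩
    · exact zero_mem _
  · rintro _ ⟨i, rfl⟩
    exact ⟨Fin.castLE hdn i, by simp⟩

section GradedPieces

variable {k : Type} [Field k] {r : ℕ} {I : Ideal (MvPolynomial (Fin r) k)}

instance (i : ℕ) : Module.Finite k (quotPiece k I i) := by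
  unfold quotPiece
  infer_instance

theorem quotPiece_eq_bot_of_hilb_eq_zero {i : ℕ} (h : hilb k I i = 0) : quotPiece k I i = ⊥ :=
  Submodule.finrank_eq_zero.mp h

theorem map_aeval_homogeneousSubmodule_eq_quotPiece {σ : Type*} [Fintype σ]
    {w : σ → MvPolynomial (Fin r) k ⧸ I} (hw : Submodule.span k (Set.range w) = quotPiece k I 1)
    (j : ℕ) : (homogeneousSubmodule σ k j).map (aeval w).toLinearMap = quotPiece k I j := by
  have hspan : (homogeneousSubmodule σ k 1).map (aeval w).toLinearMap = quotPiece k I 1 := by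
    rw [homogeneousSubmodule_one_eq_span_X, Submodule.map_span, ← Set.range_comp, ← hw]
    simp [Function.comp_def]
  have hlift : ∀ i, ∃ u ∈ homogeneousSubmodule (Fin r) k 1, Ideal.Quotient.mk I u = w i :=
    fun i => (hw ▸ Submodule.subset_span ⟨i, rfl⟩ : w i ∈ quotPiece k I 1)
  have hdescend : ∀ t, ∃ v ∈ homogeneousSubmodule σ k 1, aeval w v = Ideal.Quotient.mk I (X t) :=
    fun t => hspan.ge ⟨X t, isHomogeneous_X k t, rfl⟩
  choose u hu hwu using hlift
  choose v hv hwv using hdescend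
  have hw_eq : aeval w = (Ideal.Quotient.mkₐ k I).comp (aeval u) :=
    algHom_ext fun i => by simp [hwu]
  have hmk_eq : (aeval w).comp (aeval v) = Ideal.Quotient.mkₐ k I :=
    algHom_ext fun t => by simp [hwv]
  apply le_antisymm
  · rw [hw_eq, AlgHom.comp_toLinearMap, Submodule.map_comp]
    exact Submodule.map_mono (map_aeval_homogeneousSubmodule_le hu j)
  · rw [quotPiece, ← hmk_eq, AlgHom.comp_toLinearMap, Submodule.map_comp]
    exact Submodule.map_mono (map_aeval_homogeneousSubmodule_le hv j)

theorem eq_zero_of_mul_eq_zero_of_mem_quotPiece {σ : Type*}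
    {ψ : MvPolynomial σ k →ₐ[k] MvPolynomial (Fin r) k ⧸ I} {i : ℕ}
    (hψ : (homogeneousSubmodule σ k i).map ψ.toLinearMap = quotPiece k I i)
    {ℓ : MvPolynomial σ k} (hℓ : ℓ.IsHomogeneous 1) (hℓ0 : ℓ ≠ 0)
    (hker : ∀ f : MvPolynomial σ k, f.IsHomogeneous (i + 1) → ψ f = 0 → f = 0)
    {x : MvPolynomial (Fin r) k ⧸ I} (hx : x ∈ quotPiece k I i) (hℓx : ψ ℓ * x = 0) : x = 0 := by
  rw [← hψ] at hx
  obtain ⟨p, hp, rfl⟩ := hx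
  have : ℓ * p = 0 := hker _ (by simpa [add_comm] using hℓ.mul hp) (by simpa using hℓx)
  simp [(mul_eq_zero.mp this).resolve_left hℓ0]

/-- Subtracting from a form of degree `i + 1` the multiple of `g` with the same value at `pt`
leaves a multiple of `ℓ`. -/
theorem exists_mul_eq_of_mem_quotPiece_succ
    {ψ : MvPolynomial (Fin 2) k →ₐ[k] MvPolynomial (Fin r) k ⧸ I}
    (hψ : ∀ j, (homogeneousSubmodule (Fin 2) k j).map ψ.toLinearMap = quotPiece k I j)
    {ℓ : MvPolynomial (Fin 2) k} (hℓ : ℓ.IsHomogeneous 1) (hℓ0 : ℓ ≠ 0)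
    {pt : Fin 2 → k} (hpt : pt ≠ 0) (hℓpt : eval pt ℓ = 0)
    {i : ℕ} {g : MvPolynomial (Fin 2) k} (hg : g.IsHomogeneous (i + 1)) (hψg : ψ g = 0)
    (hgpt : eval pt g ≠ 0) {y : MvPolynomial (Fin r) k ⧸ I} (hy : y ∈ quotPiece k I (i + 1)) :
    ∃ x ∈ quotPiece k I i, ψ ℓ * x = y := by
  rw [← hψ] at hy
  obtain ⟨p, hp, rfl⟩ := hy
  obtain ⟨q, hq, hpq⟩ := exists_eq_mul_of_eval_eq_zero hℓ hℓ0 hpt hℓpt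
    (hp.sub (hg.C_mul (eval pt p / eval pt g))) (by simp [hgpt])
  refine ⟨ψ q, hψ i ▸ ⟨q, hq, rfl⟩, ?_⟩
  rw [← map_mul, ← hpq]
  simp [hψg]

theorem wlp_of_map_homogeneousSubmodule_eq [Infinite k]
    (ψ : MvPolynomial (Fin 2) k →ₐ[k] MvPolynomial (Fin r) k ⧸ I)
    (hψ : ∀ j, (homogeneousSubmodule (Fin 2) k j).map ψ.toLinearMap = quotPiece k I j)
    {f : MvPolynomial (Fin 2) k} {d : ℕ} (hf0 : f ≠ 0) (hf : f.IsHomogeneous d) (hψf : ψ f = 0) :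
    WLP k I := by
  classical
  have hex : ∃ d, ∃ f : MvPolynomial (Fin 2) k, f ≠ 0 ∧ f.IsHomogeneous d ∧ ψ f = 0 :=
    ⟨d, f, hf0, hf, hψf⟩
  obtain ⟨f₀, hf₀0, hf₀, hψf₀⟩ := Nat.find_spec hex
  -- `X 0 * f₀` rather than `f₀`, so that moreover `pt ≠ 0`
  obtain ⟨pt, hpt⟩ : ∃ pt, eval pt (X 0 * f₀) ≠ 0 := by
    by_contra! h
    exact mul_ne_zero (X_ne_zero 0) hf₀0 (MvPolynomial.funext fun x => by simpa using h x)
  rw [eval_mul, eval_X] at hpt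
  have hpt0 : pt ≠ 0 := fun h => left_ne_zero_of_mul hpt (by simp [h])
  obtain ⟨ℓ, hℓ, hℓ0, hℓpt⟩ := exists_isHomogeneous_one_ne_zero_eval_eq_zero hpt0
  obtain ⟨L, hL, hLℓ⟩ : ψ ℓ ∈ quotPiece k I 1 := hψ 1 ▸ ⟨ℓ, hℓ, rfl⟩
  refine ⟨L, hL, fun i => ?_⟩
  rw [show Ideal.Quotient.mk I L = ψ ℓ from hLℓ]
  by_cases hi : i + 1 < Nat.find hex
  · refine .inl fun x hx => eq_zero_of_mul_eq_zero_of_mem_quotPiece (hψ i) hℓ hℓ0 ?_ hx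
    exact fun g hg hψg => by_contra fun hg0 => Nat.find_min hex hi ⟨g, hg0, hg, hψg⟩
  · refine .inr fun y hy => exists_mul_eq_of_mem_quotPiece_succ hψ hℓ hℓ0 hpt0 hℓpt
      (g := X 0 ^ (i + 1 - Nat.find hex) * f₀) ?_ (by simp [hψf₀]) ?_ hy
    · have := (isHomogeneous_X_pow (0 : Fin 2) (i + 1 - Nat.find hex)).mul hf₀
      rwa [Nat.sub_add_cancel (not_lt.mp hi)] at this
    · simpa using mul_ne_zero (pow_ne_zero _ (left_ne_zero_of_mul hpt)) (right_ne_zero_of_mul hpt)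

end GradedPieces

theorem stmt9_general (k : Type) [Field k] [CharZero k] (r : ℕ)
    (I : Ideal (MvPolynomial (Fin r) k))
    (hart : ArtinianQuot k I)
    (hcodim : hilb k I 1 ≤ 2) :
    WLP k I := by
  obtain ⟨w, hw⟩ := Submodule.exists_fun_fin_span_eq_of_finrank_le hcodim
  have hψ := map_aeval_homogeneousSubmodule_eq_quotPiece hw
  obtain ⟨N, hN⟩ := hart
  refine wlp_of_map_homogeneousSubmodule_eq (aeval w) hψ (pow_ne_zero N (X_ne_zero 0))
    (isHomogeneous_X_pow 0 N) ?_
  have h : aeval w (X 0 ^ N) ∈ quotPiece k I N := (hψ N).le ⟨_, isHomogeneous_X_pow 0 N, rfl⟩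
  rwa [quotPiece_eq_bot_of_hilb_eq_zero (hN N le_rfl), Submodule.mem_bot] at h

/-- Corollary 7, [HMNW]. Over a field of characteristic
zero, every artinian standard graded algebra of codimension at most 2
(i.e. with `dim_k A_1 ≤ 2`) enjoys the Weak Lefschetz Property. -/
theorem stmt9 (k : Type) [Field k] [CharZero k] (r : ℕ)
    (I : Ideal (MvPolynomial (Fin r) k)) (hIhom : IsHomogIdeal I)
    (hart : ArtinianQuot k I)
    (hcodim : hilb k I 1 ≤ 2) :
    WLP k I :=
  stmt9_general k r I hart hcodim
end

section
/- Let R = k[x,y,z] with k a field of characteristic zero, let Z ⊂ P^2 be a reduced set of 12 points whose coordinate ring R/I_Z has Hilbert function 1, 3, 6, 10, 12, 12, 12, … (constant equal to 12 from degree 4 on), and let I = I_Z + (x,y,z)^6. Then A = R/I is an artinian standard graded algebra with Hilbert function 1, 3, 6, 10, 12, 12, 0 and A enjoys the Weak Lefschetz Property. -/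
/-!
Because `c ↦ f (c • w)` is a polynomial in `c` whose coefficients are the values at `w` of the
homogeneous components of `f`, over an infinite field the ideal `I_Z` is homogeneous. Since
`(x,y,z)^6` contains every form of degree `≥ 6` and no nonzero form of lower degree,
`A = R/(I_Z + (x,y,z)^6)` agrees with `R/I_Z` in degrees `< 6` and vanishes from degree `6` on.
A linear form `L` vanishing at none of the points is a non-zero-divisor on `R/I_Z`, so
`·L : A_i → A_{i+1}` is injective while `i + 1 < 6`, and surjective onto `A_{i+1} = 0` afterwards.
-/

open MvPolynomial Finset

/-- The saturated homogeneous ideal `I_Z ⊆ k[x,y,z]` of the set `Z ⊆ P²` of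
points represented by the nonzero vectors `v p`: the polynomials vanishing on
all the lines through the origin spanned by the `v p` (the affine cone over
`Z`). -/
noncomputable def pointsIdeal (k : Type) [Field k] (v : Fin 12 → (Fin 3 → k)) :
    Ideal (MvPolynomial (Fin 3) k) :=
  ⨅ (p : Fin 12), ⨅ (c : k), RingHom.ker (MvPolynomial.eval (c • v p))

section Homogeneous

variable {σ R : Type*} [CommSemiring R]

theorem MvPolynomial.IsHomogeneous.eval_smul {f : MvPolynomial σ R} {n : ℕ}
    (hf : f.IsHomogeneous n) (c : R) (w : σ → R) :
    eval (c • w) f = c ^ n * eval w f := by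
  rw [eval_eq, eval_eq, Finset.mul_sum]
  refine Finset.sum_congr rfl fun d hd => ?_
  have hdeg : ∑ i ∈ d.support, d i = n := hf.degree_eq_sum_deg_support hd |>.symm
  simp only [Pi.smul_apply, smul_eq_mul, mul_pow, Finset.prod_mul_distrib,
    Finset.prod_pow_eq_pow_sum, hdeg]
  ring

theorem MvPolynomial.exists_polynomial_eval_smul (w : σ → R) (f : MvPolynomial σ R) :
    ∃ Q : Polynomial R, (∀ c, Q.eval c = eval (c • w) f) ∧
      ∀ n, Q.coeff n = eval w (homogeneousComponent n f) := by
  refine ⟨∑ n ∈ range (f.totalDegree + 1),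
      Polynomial.C (eval w (homogeneousComponent n f)) * Polynomial.X ^ n, fun c => ?_, fun n => ?_⟩
  · conv_rhs => rw [← f.sum_homogeneousComponent]
    simp only [map_sum, Polynomial.eval_finsetSum, Polynomial.eval_mul, Polynomial.eval_C,
      Polynomial.eval_pow, Polynomial.eval_X,
      (homogeneousComponent_isHomogeneous _ f).eval_smul, mul_comm]
  · simp only [Polynomial.finsetSum_coeff, Polynomial.coeff_C_mul, Polynomial.coeff_X_pow,
      mul_ite, mul_one, mul_zero, Finset.sum_ite_eq, Finset.mem_range]
    split_ifs with h
    · rfl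
    · rw [homogeneousComponent_eq_zero n f (by omega), map_zero]

theorem MvPolynomial.eval_homogeneousComponent_eq_zero {R : Type*} [CommRing R] [IsDomain R]
    [Infinite R] {w : σ → R} {f : MvPolynomial σ R} (h : ∀ c : R, eval (c • w) f = 0) (n : ℕ) :
    eval w (homogeneousComponent n f) = 0 := by
  obtain ⟨Q, hQ, hQcoeff⟩ := exists_polynomial_eval_smul w f
  have hQ0 : Q = 0 := Polynomial.funext fun c => by rw [hQ, h, Polynomial.eval_zero]
  rw [← hQcoeff, hQ0, Polynomial.coeff_zero]

end Homogeneous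

section Truncation

variable {σ R : Type*} [CommSemiring R]

theorem MvPolynomial.IsHomogeneous.mem_idealOfVars_pow {f : MvPolynomial σ R} {i N : ℕ}
    (hf : f.IsHomogeneous i) (hN : N ≤ i) : f ∈ idealOfVars σ R ^ N := by
  rw [mem_pow_idealOfVars_iff]
  intro d hd
  rw [Finsupp.degree_apply, ← hf.degree_eq_sum_deg_support hd]
  exact hN

theorem MvPolynomial.homogeneousComponent_eq_zero_of_mem_idealOfVars_pow
    {f : MvPolynomial σ R} {i N : ℕ} (hf : f ∈ idealOfVars σ R ^ N) (hi : i < N) :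
    homogeneousComponent i f = 0 := by
  ext d
  rw [coeff_homogeneousComponent, coeff_zero]
  split_ifs with h
  · exact (mem_pow_idealOfVars_iff' N f).mp hf d (h ▸ hi)
  · rfl

end Truncation

section Graded

variable {k : Type} [Field k] {r : ℕ}

theorem mem_of_mem_sup_idealOfVars_pow {I : Ideal (MvPolynomial (Fin r) k)} (hI : IsHomogIdeal I)
    {f : MvPolynomial (Fin r) k} {i N : ℕ} (hf : f.IsHomogeneous i) (hi : i < N)
    (hfJ : f ∈ I ⊔ idealOfVars (Fin r) k ^ N) : f ∈ I := by
  obtain ⟨a, ha, b, hb, rfl⟩ := Submodule.mem_sup.mp hfJ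
  have : a + b = homogeneousComponent i a := by
    rw [← homogeneousComponent_eq_self hf, map_add,
      homogeneousComponent_eq_zero_of_mem_idealOfVars_pow hb hi, add_zero]
  exact this ▸ hI a ha i

theorem hilb_eq_finrank_quotient_ker (I : Ideal (MvPolynomial (Fin r) k)) (i : ℕ) :
    hilb k I i = Module.finrank k (homogeneousSubmodule (Fin r) k i ⧸ LinearMap.ker
      ((Ideal.Quotient.mkₐ k I).toLinearMap.domRestrict (homogeneousSubmodule (Fin r) k i))) := by
  rw [hilb, quotPiece, ← LinearMap.range_domRestrict]
  exact (LinearMap.quotKerEquivRange _).finrank_eq.symm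

theorem hilb_congr {I I' : Ideal (MvPolynomial (Fin r) k)} {i : ℕ}
    (h : ∀ f : MvPolynomial (Fin r) k, f.IsHomogeneous i → (f ∈ I ↔ f ∈ I')) :
    hilb k I i = hilb k I' i := by
  have hker : LinearMap.ker ((Ideal.Quotient.mkₐ k I).toLinearMap.domRestrict
        (homogeneousSubmodule (Fin r) k i)) =
      LinearMap.ker ((Ideal.Quotient.mkₐ k I').toLinearMap.domRestrict
        (homogeneousSubmodule (Fin r) k i)) := by
    ext ⟨f, hf⟩
    simpa [Ideal.Quotient.eq_zero_iff_mem] using h f hf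
  rw [hilb_eq_finrank_quotient_ker, hilb_eq_finrank_quotient_ker, hker]

theorem quotPiece_eq_bot {I : Ideal (MvPolynomial (Fin r) k)} {i : ℕ}
    (h : ∀ f : MvPolynomial (Fin r) k, f.IsHomogeneous i → f ∈ I) :
    quotPiece k I i = ⊥ := by
  rw [eq_bot_iff]
  rintro _ ⟨f, hf, rfl⟩
  exact (Submodule.mem_bot k).mpr (Ideal.Quotient.eq_zero_iff_mem.mpr (h f hf))

theorem hilb_sup_idealOfVars_pow_of_lt {I : Ideal (MvPolynomial (Fin r) k)} (hI : IsHomogIdeal I)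
    {i N : ℕ} (hi : i < N) : hilb k (I ⊔ idealOfVars (Fin r) k ^ N) i = hilb k I i :=
  hilb_congr fun _ hf => ⟨mem_of_mem_sup_idealOfVars_pow hI hf hi, fun h => Ideal.mem_sup_left h⟩

theorem quotPiece_sup_idealOfVars_pow_of_le (I : Ideal (MvPolynomial (Fin r) k)) {i N : ℕ}
    (hi : N ≤ i) : quotPiece k (I ⊔ idealOfVars (Fin r) k ^ N) i = ⊥ :=
  quotPiece_eq_bot fun _ hf => Ideal.mem_sup_right (hf.mem_idealOfVars_pow hi)

theorem hilb_sup_idealOfVars_pow_of_le (I : Ideal (MvPolynomial (Fin r) k)) {i N : ℕ}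
    (hi : N ≤ i) : hilb k (I ⊔ idealOfVars (Fin r) k ^ N) i = 0 := by
  rw [hilb, quotPiece_sup_idealOfVars_pow_of_le I hi, finrank_bot]

theorem wlp_sup_idealOfVars_pow {I : Ideal (MvPolynomial (Fin r) k)} (hI : IsHomogIdeal I)
    {L : MvPolynomial (Fin r) k} (hL : L ∈ homogeneousSubmodule (Fin r) k 1)
    (hLI : ∀ (f : MvPolynomial (Fin r) k) (n : ℕ), f.IsHomogeneous n → L * f ∈ I → f ∈ I)
    (N : ℕ) : WLP k (I ⊔ idealOfVars (Fin r) k ^ N) := by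
  refine ⟨L, hL, fun i => ?_⟩
  rcases lt_or_ge (i + 1) N with hi | hi
  · left
    rintro _ ⟨f, hf, rfl⟩ hLf
    have hLfJ : L * f ∈ I ⊔ idealOfVars (Fin r) k ^ N := by
      rw [← Ideal.Quotient.eq_zero_iff_mem, map_mul]
      exact hLf
    have hLfI : L * f ∈ I := mem_of_mem_sup_idealOfVars_pow hI (hL.mul hf) (by omega) hLfJ
    exact Ideal.Quotient.eq_zero_iff_mem.mpr (Ideal.mem_sup_left (hLI f i hf hLfI))
  · right
    intro y hy
    rw [quotPiece_sup_idealOfVars_pow_of_le I hi, Submodule.mem_bot] at hy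
    exact ⟨0, zero_mem _, by rw [mul_zero, hy]⟩

end Graded

theorem exists_linearForm_eval_ne_zero {k ι σ : Type*} [Field k] [Infinite k] [Finite ι]
    [Fintype σ] (w : ι → σ → k) (hw : ∀ i, w i ≠ 0) :
    ∃ L ∈ homogeneousSubmodule σ k 1, ∀ i, eval (w i) L ≠ 0 := by
  classical
  obtain ⟨φ, hφ⟩ := Module.exists_dual_forall_apply_ne_zero (K := k) w hw
  refine ⟨∑ j, C (φ (Pi.single j 1)) * X j, ?_, fun i => ?_⟩
  · exact IsHomogeneous.sum _ _ _ fun j _ => (isHomogeneous_X k j).C_mul _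
  · convert hφ i using 1
    simp only [map_sum, map_mul, eval_C, eval_X, φ.pi_apply_eq_sum_univ (w i), smul_eq_mul,
      mul_comm]
    congr! with j
    simp [Pi.single_apply, eq_comm]

section Points

variable {k : Type} [Field k] {v : Fin 12 → Fin 3 → k}

theorem mem_pointsIdeal_iff {f : MvPolynomial (Fin 3) k} :
    f ∈ pointsIdeal k v ↔ ∀ p (c : k), eval (c • v p) f = 0 := by
  simp [pointsIdeal, RingHom.mem_ker]

theorem isHomogIdeal_pointsIdeal [Infinite k] : IsHomogIdeal (pointsIdeal k v) := by
  intro f hf n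
  rw [mem_pointsIdeal_iff] at hf ⊢
  exact fun p c => eval_homogeneousComponent_eq_zero (fun c' => smul_smul c' c (v p) ▸ hf p _) n

theorem MvPolynomial.IsHomogeneous.mem_pointsIdeal_iff {f : MvPolynomial (Fin 3) k} {n : ℕ}
    (hf : f.IsHomogeneous n) : f ∈ pointsIdeal k v ↔ ∀ p, eval (v p) f = 0 := by
  rw [_root_.mem_pointsIdeal_iff]
  exact ⟨fun h p => by simpa using h p 1, fun h p c => by rw [hf.eval_smul, h p, mul_zero]⟩

theorem mem_pointsIdeal_of_mul_mem {L f : MvPolynomial (Fin 3) k} {m n : ℕ}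
    (hL : L.IsHomogeneous m) (hf : f.IsHomogeneous n) (hLv : ∀ p, eval (v p) L ≠ 0)
    (hLf : L * f ∈ pointsIdeal k v) : f ∈ pointsIdeal k v := by
  rw [(hL.mul hf).mem_pointsIdeal_iff] at hLf
  rw [hf.mem_pointsIdeal_iff]
  intro p
  have hp := hLf p
  rw [map_mul] at hp
  exact (mul_eq_zero.mp hp).resolve_left (hLv p)

end Points

theorem stmt14_general (k : Type) [Field k] [CharZero k]
    (v : Fin 12 → (Fin 3 → k))
    (hnz : ∀ p : Fin 12, v p ≠ 0)
    (hZ0 : hilb k (pointsIdeal k v) 0 = 1)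
    (hZ1 : hilb k (pointsIdeal k v) 1 = 3)
    (hZ2 : hilb k (pointsIdeal k v) 2 = 6)
    (hZ3 : hilb k (pointsIdeal k v) 3 = 10)
    (hZge4 : ∀ i : ℕ, 4 ≤ i → hilb k (pointsIdeal k v) i = 12) :
    hilb k (pointsIdeal k v ⊔ (Ideal.span (Set.range X)) ^ 6) 0 = 1 ∧
    hilb k (pointsIdeal k v ⊔ (Ideal.span (Set.range X)) ^ 6) 1 = 3 ∧
    hilb k (pointsIdeal k v ⊔ (Ideal.span (Set.range X)) ^ 6) 2 = 6 ∧
    hilb k (pointsIdeal k v ⊔ (Ideal.span (Set.range X)) ^ 6) 3 = 10 ∧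
    hilb k (pointsIdeal k v ⊔ (Ideal.span (Set.range X)) ^ 6) 4 = 12 ∧
    hilb k (pointsIdeal k v ⊔ (Ideal.span (Set.range X)) ^ 6) 5 = 12 ∧
    (∀ i : ℕ, 6 ≤ i → hilb k (pointsIdeal k v ⊔ (Ideal.span (Set.range X)) ^ 6) i = 0) ∧
    WLP k (pointsIdeal k v ⊔ (Ideal.span (Set.range X)) ^ 6) := by
  have hI : IsHomogIdeal (pointsIdeal k v) := isHomogIdeal_pointsIdeal
  have hlow (i : ℕ) (hi : i < 6) := hilb_sup_idealOfVars_pow_of_lt hI hi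
  obtain ⟨L, hL, hLv⟩ := exists_linearForm_eval_ne_zero v hnz
  refine ⟨hlow 0 (by norm_num) ▸ hZ0, hlow 1 (by norm_num) ▸ hZ1, hlow 2 (by norm_num) ▸ hZ2,
    hlow 3 (by norm_num) ▸ hZ3, hlow 4 (by norm_num) ▸ hZge4 4 le_rfl,
    hlow 5 (by norm_num) ▸ hZge4 5 (by norm_num),
    fun i hi => hilb_sup_idealOfVars_pow_of_le _ hi,
    wlp_sup_idealOfVars_pow hI hL (fun f _ hf => mem_pointsIdeal_of_mul_mem hL hf hLv) 6⟩

/-- the algebra `A₁` in the proof of Proposition 9 i. Let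
`Z ⊂ P²` be a reduced set of 12 distinct points whose coordinate ring
`R/I_Z` has Hilbert function `1, 3, 6, 10, 12, 12, 12, …`, and let
`I = I_Z + (x,y,z)^6`. Then `A = R/I` is artinian with Hilbert function
`1, 3, 6, 10, 12, 12, 0` and `A` enjoys the Weak Lefschetz Property. -/
theorem stmt14 (k : Type) [Field k] [CharZero k]
    (v : Fin 12 → (Fin 3 → k))
    (hnz : ∀ p : Fin 12, v p ≠ 0)
    (hdist : ∀ p q : Fin 12, p ≠ q → ∀ c : k, v p ≠ c • v q)
    (hZ0 : hilb k (pointsIdeal k v) 0 = 1)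
    (hZ1 : hilb k (pointsIdeal k v) 1 = 3)
    (hZ2 : hilb k (pointsIdeal k v) 2 = 6)
    (hZ3 : hilb k (pointsIdeal k v) 3 = 10)
    (hZge4 : ∀ i : ℕ, 4 ≤ i → hilb k (pointsIdeal k v) i = 12) :
    hilb k (pointsIdeal k v ⊔ (Ideal.span (Set.range X)) ^ 6) 0 = 1 ∧
    hilb k (pointsIdeal k v ⊔ (Ideal.span (Set.range X)) ^ 6) 1 = 3 ∧
    hilb k (pointsIdeal k v ⊔ (Ideal.span (Set.range X)) ^ 6) 2 = 6 ∧
    hilb k (pointsIdeal k v ⊔ (Ideal.span (Set.range X)) ^ 6) 3 = 10 ∧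
    hilb k (pointsIdeal k v ⊔ (Ideal.span (Set.range X)) ^ 6) 4 = 12 ∧
    hilb k (pointsIdeal k v ⊔ (Ideal.span (Set.range X)) ^ 6) 5 = 12 ∧
    (∀ i : ℕ, 6 ≤ i → hilb k (pointsIdeal k v ⊔ (Ideal.span (Set.range X)) ^ 6) i = 0) ∧
    WLP k (pointsIdeal k v ⊔ (Ideal.span (Set.range X)) ^ 6) :=
  stmt14_general k v hnz hZ0 hZ1 hZ2 hZ3 hZge4
end
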